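/- Let H be a Hopf algebra with twist F, A and B left H-module algebras, V a left H-module (A,B)-bimodule. For a K-linear map P : V → V define D_F(P) := (f̄^α ▶ P) ∘ (f̄_α ▷). If P is right B-linear, then D_F(P) is right B_⋆-linear on the deformed module V_⋆: D_F(P)(v ⋆ b) = D_F(P)(v) ⋆ b for all v ∈ V, b ∈ B, where v ⋆ b = (f̄^α ▷ v)·(f̄_α ▷ b). -/

import Mathlib

open TensorProduct

noncomputable section

variable (K : Type*) [CommRing K] (H : Type*) [Ring H] [HopfAlgebra K H]

namespace TwistPaper

def ΔH : H →ₗ[K] H ⊗[K] H := Coalgebra.comul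
def εH : H →ₗ[K] K := Coalgebra.counit
def SH : H →ₗ[K] H := HopfAlgebra.antipode (R := K)

def ins3 : H ⊗[K] H →ₗ[K] H ⊗[K] (H ⊗[K] H) :=
  LinearMap.lTensor H ((TensorProduct.mk K H H).flip 1)
def ins1 : H ⊗[K] H →ₗ[K] H ⊗[K] (H ⊗[K] H) :=
  TensorProduct.mk K H (H ⊗[K] H) 1
def comulLeft : H ⊗[K] H →ₗ[K] H ⊗[K] (H ⊗[K] H) :=
  (TensorProduct.assoc K H H H).toLinearMap ∘ₗ (ΔH K H).rTensor H
def comulRight : H ⊗[K] H →ₗ[K] H ⊗[K] (H ⊗[K] H) :=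
  (ΔH K H).lTensor H
def counitLeft : H ⊗[K] H →ₗ[K] H :=
  (TensorProduct.lid K H).toLinearMap ∘ₗ (εH K H).rTensor H
def counitRight : H ⊗[K] H →ₗ[K] H :=
  (TensorProduct.rid K H).toLinearMap ∘ₗ (εH K H).lTensor H

/-- `F` is a twist of the Hopf algebra `H` with inverse `Finv`. -/
structure IsTwist (F Finv : H ⊗[K] H) : Prop where
  mul_inv : F * Finv = 1
  inv_mul : Finv * F = 1
  cocycle : ins3 K H F * comulLeft K H F = ins1 K H F * comulRight K H F
  counit_left : counitLeft K H F = 1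
  counit_right : counitRight K H F = 1

/-- `sw x f g c v w = Σ c (f x¹ v) (g x² w)` for `x = Σ x¹ ⊗ x²`. -/
def sw {V W V' W' Z : Type*}
    [AddCommGroup V] [Module K V] [AddCommGroup W] [Module K W]
    [AddCommGroup V'] [Module K V'] [AddCommGroup W'] [Module K W']
    [AddCommGroup Z] [Module K Z]
    (x : H ⊗[K] H) (f : H →ₗ[K] V →ₗ[K] V') (g : H →ₗ[K] W →ₗ[K] W')
    (c : V' →ₗ[K] W' →ₗ[K] Z) : V →ₗ[K] W →ₗ[K] Z :=
  ((TensorProduct.mapBilinear (σ₁₂ := RingHom.id K) (M := H) (N := H) (M₂ := V') (N₂ := W')).compr₂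
      (TensorProduct.lift c ∘ₗ LinearMap.applyₗ (R := K) x)).compl₁₂ f.flip g.flip

/-- `ρ` is a left `H`-module structure. -/
def IsHAction {V : Type*} [AddCommGroup V] [Module K V] (ρ : H →ₗ[K] V →ₗ[K] V) : Prop :=
  (∀ ξ ζ : H, ∀ v : V, ρ (ξ * ζ) v = ρ ξ (ρ ζ v)) ∧ (∀ v : V, ρ 1 v = v)

/-- `(A, m, ρ)` is a left `H`-module algebra. -/
def IsModuleAlgebra {A : Type*} [AddCommGroup A] [Module K A]
    (m : A →ₗ[K] A →ₗ[K] A) (ρ : H →ₗ[K] A →ₗ[K] A) : Prop :=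
  IsHAction K H ρ ∧ ∀ (ξ : H) (a b : A), ρ ξ (m a b) = sw K H (ΔH K H ξ) ρ ρ m a b

/-- `conjEnd f g (η ⊗ ζ) P = f η ∘ₗ P ∘ₗ g ζ` on `Hom_K(V,W)`. -/
def conjEnd {V W : Type*} [AddCommGroup V] [Module K V] [AddCommGroup W] [Module K W]
    (f : H →ₗ[K] W →ₗ[K] W) (g : H →ₗ[K] V →ₗ[K] V) :
    H ⊗[K] H →ₗ[K] (V →ₗ[K] W) →ₗ[K] (V →ₗ[K] W) :=
  TensorProduct.lift
    ((LinearMap.llcomp K (V →ₗ[K] W) (V →ₗ[K] W) (V →ₗ[K] W) ∘ₗ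
        (LinearMap.llcomp K V W W ∘ₗ f)).compl₂
      ((LinearMap.llcomp K V V W).flip ∘ₗ g))

/-- `twistEnd F1 F2 (η ⊗ ζ) = F1 η ∘ₗ F2 ζ` as an operator on `X`. -/
def twistEnd {X : Type*} [AddCommGroup X] [Module K X]
    (F1 F2 : H →ₗ[K] X →ₗ[K] X) : H ⊗[K] H →ₗ[K] X →ₗ[K] X :=
  TensorProduct.lift ((LinearMap.llcomp K X X X ∘ₗ F1).compl₂ F2)

/-- The `H`-adjoint action `ξ ▶ P = (ξ₁ ▷) ∘ P ∘ (S(ξ₂) ▷)` on `Hom_K(V,W)`. -/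
def adjHom {V W : Type*} [AddCommGroup V] [Module K V] [AddCommGroup W] [Module K W]
    (ρW : H →ₗ[K] W →ₗ[K] W) (ρV : H →ₗ[K] V →ₗ[K] V) :
    H →ₗ[K] (V →ₗ[K] W) →ₗ[K] (V →ₗ[K] W) :=
  conjEnd K H ρW (ρV ∘ₗ SH K H) ∘ₗ ΔH K H

/-- The deformation map `D_F(P) = (f̄^α ▶ P) ∘ (f̄_α ▷)` on `Hom_K(V,W)`. -/
def DFhom {V W : Type*} [AddCommGroup V] [Module K V] [AddCommGroup W] [Module K W]
    (Finv : H ⊗[K] H) (ρW : H →ₗ[K] W →ₗ[K] W) (ρV : H →ₗ[K] V →ₗ[K] V) :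
    (V →ₗ[K] W) →ₗ[K] (V →ₗ[K] W) :=
  twistEnd K H ((LinearMap.llcomp K V V W).flip ∘ₗ ρV) (adjHom K H ρW ρV)
    (TensorProduct.comm K H H Finv)

variable {A B V : Type*} [AddCommGroup A] [Module K A] [AddCommGroup B] [Module K B]
  [AddCommGroup V] [Module K V]

/-!
Both sides are values of the linear map `p ⊗ q ⊗ s ↦ (p ▶ P)((q ▷ v)·(s ▷ b))` on `H ⊗ H ⊗ H`: the left side at `(1 ⊗ Δ)F⁻¹ · (1 ⊗ F⁻¹)` and the right side at
`(Δ ⊗ 1)F⁻¹ · (F⁻¹ ⊗ 1)`, which agree by the cocycle identity for `F⁻¹` (the inverse of the one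
for `F`). The left side only needs `ξ ▷ (v·b) = (ξ₁ ▷ v)·(ξ₂ ▷ b)`; the right side needs
`ξ ▷ Q(w) = (ξ₁ ▶ Q)(ξ₂ ▷ w)` and that every `ξ ▶ P` is again right `B`-linear, which rests on
the antipode being an anti-coalgebra map. The Sweedler computations behind these reduce to
associativity in the convolution algebras of linear maps `H → H ⊗ H` and `H → End V`.
-/

open Coalgebra HopfAlgebra WithConv

section ConvolutionAlgebra

variable {R C A : Type*} [CommSemiring R] [AddCommMonoid C] [Module R C] [Coalgebra R C]
  [Semiring A] [Algebra R A]

lemma mulLeft_comp_convMul (a : A) (f g : WithConv (C →ₗ[R] A)) :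
    toConv (LinearMap.mulLeft R a ∘ₗ f.ofConv) * g
      = toConv (LinearMap.mulLeft R a ∘ₗ (f * g).ofConv) := by
  ext c
  simp [(ℛ R c).convMul_apply, mul_assoc]

lemma convMul_mulRight_comp (a : A) (f g : WithConv (C →ₗ[R] A)) :
    f * toConv (LinearMap.mulRight R a ∘ₗ g.ofConv)
      = toConv (LinearMap.mulRight R a ∘ₗ (f * g).ofConv) := by
  ext c
  simp [(ℛ R c).convMul_apply, mul_assoc]

end ConvolutionAlgebra

section Antipode

open Algebra.TensorProduct

variable {R H A : Type*} [CommSemiring R] [Semiring H] [HopfAlgebra R H] [Semiring A] [Algebra R A]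

lemma algHom_comp_antipode_convMul_eq_one (h : H →ₐ[R] A) :
    toConv (h.toLinearMap ∘ₗ antipode R) * toConv h.toLinearMap = 1 := by
  ext c
  simp [(ℛ R c).convMul_apply, ← map_mul, ← map_sum, sum_antipode_mul_eq_algebraMap_counit]

lemma convMul_algHom_comp_antipode_eq_one (h : H →ₐ[R] A) :
    toConv h.toLinearMap * toConv (h.toLinearMap ∘ₗ antipode R) = 1 := by
  ext c
  simp [(ℛ R c).convMul_apply, ← map_mul, ← map_sum, sum_mul_antipode_eq_algebraMap_counit]

lemma comul_eq_includeLeft_convMul_includeRight :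
    toConv (comul : H →ₗ[R] H ⊗[R] H)
      = toConv (includeLeft : H →ₐ[R] H ⊗[R] H).toLinearMap * toConv includeRight.toLinearMap := by
  ext c
  simp [(ℛ R c).convMul_apply, ← (ℛ R c).eq]

lemma comul_convMul_includeRight_comp_antipode :
    toConv (comul : H →ₗ[R] H ⊗[R] H) * toConv (includeRight.toLinearMap ∘ₗ antipode R)
      = toConv (includeLeft : H →ₐ[R] H ⊗[R] H).toLinearMap := by
  rw [comul_eq_includeLeft_convMul_includeRight, mul_assoc, convMul_algHom_comp_antipode_eq_one,
    mul_one]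

theorem comul_comp_antipode :
    comul ∘ₗ antipode R
      = map (antipode R) (antipode R) ∘ₗ (TensorProduct.comm R H H).toLinearMap ∘ₗ comul := by
  have hG :
      toConv (map (antipode R) (antipode R) ∘ₗ (TensorProduct.comm R H H).toLinearMap ∘ₗ comul)
        = toConv ((includeRight : H →ₐ[R] H ⊗[R] H).toLinearMap ∘ₗ antipode R)
          * toConv ((includeLeft : H →ₐ[R] H ⊗[R] H).toLinearMap ∘ₗ antipode R) := by
    ext c
    simp [(ℛ R c).convMul_apply, ← (ℛ R c).eq]
  have hinv :
      toConv (map (antipode R) (antipode R) ∘ₗ (TensorProduct.comm R H H).toLinearMap ∘ₗ comul)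
        * toConv comul = 1 := by
    rw [hG, comul_eq_includeLeft_convMul_includeRight, mul_assoc,
      ← mul_assoc (toConv ((includeLeft : H →ₐ[R] H ⊗[R] H).toLinearMap ∘ₗ antipode R)),
      algHom_comp_antipode_convMul_eq_one, one_mul, algHom_comp_antipode_convMul_eq_one]
  exact congrArg ofConv (left_inv_eq_right_inv hinv LinearMap.comul_right_inv).symm

end Antipode

section AdjointAction

variable {K H}

lemma sw_tmul {X Y X' Y' Z : Type*} [AddCommGroup X] [Module K X] [AddCommGroup Y] [Module K Y]
    [AddCommGroup X'] [Module K X'] [AddCommGroup Y'] [Module K Y'] [AddCommGroup Z] [Module K Z]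
    (η ζ : H) (f : H →ₗ[K] X →ₗ[K] X') (g : H →ₗ[K] Y →ₗ[K] Y') (c : X' →ₗ[K] Y' →ₗ[K] Z)
    (x : X) (y : Y) :
    sw K H (η ⊗ₜ[K] ζ) f g c x y = c (f η x) (g ζ y) := by
  simp [sw]

lemma sw_add {X Y X' Y' Z : Type*} [AddCommGroup X] [Module K X] [AddCommGroup Y] [Module K Y]
    [AddCommGroup X'] [Module K X'] [AddCommGroup Y'] [Module K Y'] [AddCommGroup Z] [Module K Z]
    (z₁ z₂ : H ⊗[K] H) (f : H →ₗ[K] X →ₗ[K] X') (g : H →ₗ[K] Y →ₗ[K] Y')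
    (c : X' →ₗ[K] Y' →ₗ[K] Z) (x : X) (y : Y) :
    sw K H (z₁ + z₂) f g c x y = sw K H z₁ f g c x y + sw K H z₂ f g c x y := by
  simp [sw]

lemma sw_sum {X Y X' Y' Z ι : Type*} [AddCommGroup X] [Module K X] [AddCommGroup Y] [Module K Y]
    [AddCommGroup X'] [Module K X'] [AddCommGroup Y'] [Module K Y'] [AddCommGroup Z] [Module K Z]
    (s : Finset ι) (z : ι → H ⊗[K] H) (f : H →ₗ[K] X →ₗ[K] X') (g : H →ₗ[K] Y →ₗ[K] Y')
    (c : X' →ₗ[K] Y' →ₗ[K] Z) (x : X) (y : Y) :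
    sw K H (∑ i ∈ s, z i) f g c x y = ∑ i ∈ s, sw K H (z i) f g c x y := by
  simp [sw]

def IsHAction.toAlgHom {ρ : H →ₗ[K] V →ₗ[K] V} (hρ : IsHAction K H ρ) :
    H →ₐ[K] Module.End K V :=
  AlgHom.ofLinearMap ρ (LinearMap.ext hρ.2) fun ξ ζ => LinearMap.ext (hρ.1 ξ ζ)

lemma adjHom_repr {W ι : Type*} [AddCommGroup W] [Module K W] (ρW : H →ₗ[K] W →ₗ[K] W)
    (ρV : H →ₗ[K] V →ₗ[K] V) {ξ : H} (ℛξ : Repr K ξ ι) (Q : V →ₗ[K] W) (m : V) :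
    adjHom K H ρW ρV ξ Q m
      = ∑ i ∈ ℛξ.index, ρW (ℛξ.left i) (Q (ρV (antipode K (ℛξ.right i)) m)) := by
  simp [adjHom, ΔH, ← ℛξ.eq, conjEnd, SH]

lemma adjHom_eq_convMul (ρ : H →ₗ[K] Module.End K V) (ξ : H) (Q : Module.End K V) :
    adjHom K H ρ ρ ξ Q
      = (toConv ρ * toConv (LinearMap.mulLeft K Q ∘ₗ ρ ∘ₗ antipode K)) ξ := by
  ext m
  simp [adjHom_repr _ _ (ℛ K ξ), (ℛ K ξ).convMul_apply]

lemma adjHom_mul {W : Type*} [AddCommGroup W] [Module K W] {ρW : H →ₗ[K] W →ₗ[K] W}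
    {ρV : H →ₗ[K] V →ₗ[K] V} (hW : IsHAction K H ρW) (hV : IsHAction K H ρV) (ξ η : H)
    (Q : V →ₗ[K] W) :
    adjHom K H ρW ρV (ξ * η) Q = adjHom K H ρW ρV ξ (adjHom K H ρW ρV η Q) := by
  ext m
  simp [adjHom_repr _ _ ((ℛ K ξ).mul (ℛ K η)), adjHom_repr _ _ (ℛ K ξ),
    adjHom_repr _ _ (ℛ K η), Finset.sum_product, antipode_mul_antidistrib, hW.1, hV.1]

lemma comp_eq_sum_adjHom_comp {ρ : H →ₗ[K] Module.End K V} (hρ : IsHAction K H ρ)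
    (Q : Module.End K V) {ξ : H} {ι : Type*} (ℛξ : Repr K ξ ι) :
    ρ ξ ∘ₗ Q = ∑ i ∈ ℛξ.index, adjHom K H ρ ρ (ℛξ.left i) Q ∘ₗ ρ (ℛξ.right i) := by
  have hunit : toConv (LinearMap.mulLeft K Q ∘ₗ ρ ∘ₗ antipode K) * toConv ρ
      = toConv (LinearMap.mulRight K Q ∘ₗ (1 : WithConv (H →ₗ[K] Module.End K V)).ofConv) := by
    rw [mulLeft_comp_convMul, show toConv (ρ ∘ₗ antipode K) * toConv ρ = 1 from
      algHom_comp_antipode_convMul_eq_one hρ.toAlgHom]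
    ext ξ : 2
    simp [Algebra.commutes]
  have hconv : toConv ρ * toConv (LinearMap.mulLeft K Q ∘ₗ ρ ∘ₗ antipode K) * toConv ρ
      = toConv (LinearMap.mulRight K Q ∘ₗ ρ) := by
    rw [mul_assoc, hunit, convMul_mulRight_comp, mul_one]
  simpa [ℛξ.convMul_apply, adjHom_eq_convMul, Module.End.mul_eq_comp] using
    (congrArg (fun f => f ξ) hconv).symm

end AdjointAction

section RightModule

variable {K H}
variable {ρB : H →ₗ[K] B →ₗ[K] B} {ρV : H →ₗ[K] V →ₗ[K] V} {r : B →ₗ[K] V →ₗ[K] V}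

lemma rho_sw (hV : IsHAction K H ρV) (hB : IsHAction K H ρB)
    (hcr : ∀ (ξ : H) (b : B) (v : V), ρV ξ (r b v) = sw K H (ΔH K H ξ) ρV ρB r.flip v b)
    (ξ : H) (z : H ⊗[K] H) (v : V) (b : B) :
    ρV ξ (sw K H z ρV ρB r.flip v b) = sw K H (comul ξ * z) ρV ρB r.flip v b := by
  induction z using TensorProduct.induction_on with
  | zero => simp [sw]
  | add z₁ z₂ h₁ h₂ => rw [mul_add, sw_add, sw_add, map_add, h₁, h₂]
  | tmul q s =>
    rw [sw_tmul, LinearMap.flip_apply, hcr, ΔH, ← (ℛ K ξ).eq, Finset.sum_mul, sw_sum, sw_sum]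
    simp [sw_tmul, hV.1, hB.1]

lemma mulRight_comp_antipode_eq_convMul
    (hcr : ∀ (ξ : H) (b : B) (v : V), ρV ξ (r b v) = sw K H (ΔH K H ξ) ρV ρB r.flip v b)
    {P : Module.End K V} (hP : ∀ (b : B) (v : V), P (r b v) = r b (P v)) (c : B) :
    toConv (LinearMap.mulRight K (r c) ∘ₗ LinearMap.mulLeft K P ∘ₗ ρV ∘ₗ antipode K)
      = toConv (r ∘ₗ ρB.flip c ∘ₗ antipode K)
        * toConv (LinearMap.mulLeft K P ∘ₗ ρV ∘ₗ antipode K) := by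
  ext ξ m
  have hS := LinearMap.congr_fun (comul_comp_antipode (R := K) (H := H)) ξ
  simp only [LinearMap.comp_apply, LinearEquiv.coe_coe] at hS
  simp [(ℛ K ξ).convMul_apply, hcr, ΔH, hS, ← (ℛ K ξ).eq, sw_sum, sw_tmul, hP]

lemma convMul_comp_antipode_eq_mulLeft (hV : IsHAction K H ρV) (hB : IsHAction K H ρB)
    (hcr : ∀ (ξ : H) (b : B) (v : V), ρV ξ (r b v) = sw K H (ΔH K H ξ) ρV ρB r.flip v b)
    (c : B) :
    toConv ρV * toConv (r ∘ₗ ρB.flip c ∘ₗ antipode K)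
      = toConv (LinearMap.mulLeft K (r c) ∘ₗ ρV) := by
  ext ξ m
  have key := congrArg (fun f => f ξ)
    (comul_convMul_includeRight_comp_antipode (R := K) (H := H))
  simp only [(ℛ K ξ).convMul_apply, LinearMap.comp_apply, AlgHom.toLinearMap_apply,
    Algebra.TensorProduct.includeRight_apply, Algebra.TensorProduct.includeLeft_apply] at key
  calc (toConv ρV * toConv (r ∘ₗ ρB.flip c ∘ₗ antipode K)) ξ m
      = ∑ i ∈ (ℛ K ξ).index, ρV ((ℛ K ξ).left i)
          (sw K H (1 ⊗ₜ antipode K ((ℛ K ξ).right i)) ρV ρB r.flip m c) := by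
        simp [(ℛ K ξ).convMul_apply, sw_tmul, hV.2]
    _ = sw K H (∑ i ∈ (ℛ K ξ).index,
          comul ((ℛ K ξ).left i) * (1 ⊗ₜ antipode K ((ℛ K ξ).right i))) ρV ρB r.flip m c := by
        simp [rho_sw hV hB hcr, sw_sum]
    _ = r c (ρV ξ m) := by
        rw [key]
        simp [sw_tmul, hB.2]

lemma adjHom_apply_r (hV : IsHAction K H ρV) (hB : IsHAction K H ρB)
    (hcr : ∀ (ξ : H) (b : B) (v : V), ρV ξ (r b v) = sw K H (ΔH K H ξ) ρV ρB r.flip v b)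
    {P : Module.End K V} (hP : ∀ (b : B) (v : V), P (r b v) = r b (P v))
    (x : H) (c : B) (m : V) :
    adjHom K H ρV ρV x P (r c m) = r c (adjHom K H ρV ρV x P m) := by
  have hconv : toConv (LinearMap.mulRight K (r c) ∘ₗ
        (toConv ρV * toConv (LinearMap.mulLeft K P ∘ₗ ρV ∘ₗ antipode K)).ofConv)
      = toConv (LinearMap.mulLeft K (r c) ∘ₗ
        (toConv ρV * toConv (LinearMap.mulLeft K P ∘ₗ ρV ∘ₗ antipode K)).ofConv) := by
    rw [← convMul_mulRight_comp, ofConv_toConv, mulRight_comp_antipode_eq_convMul hcr hP,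
      ← mul_assoc, convMul_comp_antipode_eq_mulLeft hV hB hcr, mulLeft_comp_convMul]
  simpa [adjHom_eq_convMul] using congrArg (fun f => f x m) hconv

end RightModule

theorem map_inverse_mul_rev_eq {M N Φ : Type*} [Monoid M] [Monoid N] [FunLike Φ M N]
    [MonoidHomClass Φ M N] (φ₁ φ₂ φ₃ φ₄ : Φ) {u u' : M} (hu : u * u' = 1) (hu' : u' * u = 1)
    (h : φ₁ u * φ₂ u = φ₃ u * φ₄ u) :
    φ₂ u' * φ₁ u' = φ₄ u' * φ₃ u' := by
  refine left_inv_eq_right_inv (a := φ₁ u * φ₂ u) ?_ ?_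
  · rw [mul_assoc, ← mul_assoc (φ₁ u'), ← map_mul, hu', map_one, one_mul, ← map_mul, hu', map_one]
  · rw [h, mul_assoc, ← mul_assoc (φ₄ u), ← map_mul, hu, map_one, one_mul, ← map_mul, hu, map_one]

section Twist

open Algebra.TensorProduct

variable {K H}

lemma ins1_eq_includeRight :
    ins1 K H = (includeRight : H ⊗[K] H →ₐ[K] H ⊗[K] (H ⊗[K] H)).toLinearMap :=
  rfl

lemma ins3_eq_map_includeLeft :
    ins3 K H = (map (AlgHom.id K H) (includeLeft : H →ₐ[K] H ⊗[K] H)).toLinearMap := by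
  ext; rfl

lemma comulRight_eq_map_comulAlgHom :
    comulRight K H = (map (AlgHom.id K H) (Bialgebra.comulAlgHom K H)).toLinearMap := by
  ext; rfl

lemma comulLeft_eq_assoc_comp_map_comulAlgHom :
    comulLeft K H = ((Algebra.TensorProduct.assoc K K K H H H).toAlgHom.comp
      (map (Bialgebra.comulAlgHom K H) (AlgHom.id K H))).toLinearMap := by
  ext; rfl

theorem IsTwist.inv_cocycle {F Finv : H ⊗[K] H} (hF : IsTwist K H F Finv) :
    comulLeft K H Finv * ins3 K H Finv = comulRight K H Finv * ins1 K H Finv := by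
  have h := hF.cocycle
  rw [ins1_eq_includeRight, ins3_eq_map_includeLeft, comulRight_eq_map_comulAlgHom,
    comulLeft_eq_assoc_comp_map_comulAlgHom] at h ⊢
  simp only [AlgHom.toLinearMap_apply] at h ⊢
  exact map_inverse_mul_rev_eq _ _ _ _ hF.mul_inv hF.inv_mul h

end Twist

section Deformation

variable {K H}
variable {ρB : H →ₗ[K] B →ₗ[K] B} {ρV : H →ₗ[K] V →ₗ[K] V} {r : B →ₗ[K] V →ₗ[K] V}

variable (ρB ρV r) in
def adjStar (P : Module.End K V) (v : V) (b : B) : H ⊗[K] (H ⊗[K] H) →ₗ[K] V :=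
  lift (LinearMap.lcomp K V (lift r.flip ∘ₗ map (ρV.flip v) (ρB.flip b))
    ∘ₗ (adjHom K H ρV ρV).flip P)

lemma adjStar_tmul (P : Module.End K V) (v : V) (b : B) (p : H) (z : H ⊗[K] H) :
    adjStar ρB ρV r P v b (p ⊗ₜ z) = adjHom K H ρV ρV p P (sw K H z ρV ρB r.flip v b) := rfl

lemma DFhom_tmul {W : Type*} [AddCommGroup W] [Module K W] (ρW : H →ₗ[K] W →ₗ[K] W)
    (x y : H) (Q : V →ₗ[K] W) (m : V) :
    DFhom K H (x ⊗ₜ y) ρW ρV Q m = adjHom K H ρW ρV x Q (ρV y m) := by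
  simp [DFhom, twistEnd]

lemma DFhom_add {W : Type*} [AddCommGroup W] [Module K W] (ρW : H →ₗ[K] W →ₗ[K] W)
    (G₁ G₂ : H ⊗[K] H) :
    DFhom K H (G₁ + G₂) ρW ρV = DFhom K H G₁ ρW ρV + DFhom K H G₂ ρW ρV := by
  simp [DFhom]

lemma DFhom_sw (hV : IsHAction K H ρV) (hB : IsHAction K H ρB)
    (hcr : ∀ (ξ : H) (b : B) (v : V), ρV ξ (r b v) = sw K H (ΔH K H ξ) ρV ρB r.flip v b)
    (P : Module.End K V) (G G' : H ⊗[K] H) (v : V) (b : B) :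
    DFhom K H G ρV ρV P (sw K H G' ρV ρB r.flip v b)
      = adjStar ρB ρV r P v b (comulRight K H G * ins1 K H G') := by
  induction G using TensorProduct.induction_on with
  | zero => simp [DFhom]
  | add G₁ G₂ h₁ h₂ =>
    rw [DFhom_add, LinearMap.add_apply, LinearMap.add_apply, h₁, h₂, map_add, add_mul, map_add]
  | tmul x y =>
    have hprod : comulRight K H (x ⊗ₜ y) * ins1 K H G' = x ⊗ₜ (comul y * G') := by
      simp [comulRight, ins1, ΔH, Algebra.TensorProduct.tmul_mul_tmul]
    rw [DFhom_tmul, rho_sw hV hB hcr, hprod, adjStar_tmul]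

lemma rho_adjHom (hV : IsHAction K H ρV) (P : Module.End K V) (u x : H) (n : V) :
    ρV u (adjHom K H ρV ρV x P n) = ∑ i ∈ (ℛ K u).index,
      adjHom K H ρV ρV ((ℛ K u).left i * x) P (ρV ((ℛ K u).right i) n) := by
  simpa [adjHom_mul hV hV] using
    LinearMap.congr_fun (comp_eq_sum_adjHom_comp hV (adjHom K H ρV ρV x P) (ℛ K u)) n

lemma sw_DFhom (hV : IsHAction K H ρV) (hB : IsHAction K H ρB)
    (hcr : ∀ (ξ : H) (b : B) (v : V), ρV ξ (r b v) = sw K H (ΔH K H ξ) ρV ρB r.flip v b)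
    {P : Module.End K V} (hP : ∀ (b : B) (v : V), P (r b v) = r b (P v))
    (G G' : H ⊗[K] H) (v : V) (b : B) :
    sw K H G' ρV ρB r.flip (DFhom K H G ρV ρV P v) b
      = adjStar ρB ρV r P v b (comulLeft K H G' * ins3 K H G) := by
  induction G' using TensorProduct.induction_on with
  | zero => simp [sw]
  | add G₁ G₂ h₁ h₂ => simp only [sw_add, map_add, add_mul, h₁, h₂]
  | tmul u w =>
    induction G using TensorProduct.induction_on with
    | zero => simp [DFhom]
    | add G₁ G₂ h₁ h₂ =>
      simp only [DFhom_add, LinearMap.add_apply, map_add, mul_add, h₁, h₂]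
    | tmul x y =>
      have hprod : comulLeft K H (u ⊗ₜ w) * ins3 K H (x ⊗ₜ y)
          = ∑ i ∈ (ℛ K u).index, ((ℛ K u).left i * x) ⊗ₜ (((ℛ K u).right i * y) ⊗ₜ w) := by
        simp [comulLeft, ins3, ΔH, ← (ℛ K u).eq, sum_tmul, Finset.sum_mul,
          Algebra.TensorProduct.tmul_mul_tmul]
      rw [hprod, map_sum, sw_tmul, LinearMap.flip_apply, DFhom_tmul, rho_adjHom hV, map_sum]
      refine Finset.sum_congr rfl fun i _ => ?_
      rw [adjStar_tmul, sw_tmul, LinearMap.flip_apply, ← adjHom_apply_r hV hB hcr hP, hV.1]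

end Deformation

theorem DF_right_star_linear (F Finv : H ⊗[K] H) (hF : IsTwist K H F Finv)
    (mB : B →ₗ[K] B →ₗ[K] B) (ρB : H →ₗ[K] B →ₗ[K] B)
    (hBma : IsModuleAlgebra K H mB ρB)
    (ρV : H →ₗ[K] V →ₗ[K] V) (hV : IsHAction K H ρV)
    (r : B →ₗ[K] V →ₗ[K] V)
    (hcr : ∀ (ξ : H) (b : B) (v : V), ρV ξ (r b v) = sw K H (ΔH K H ξ) ρV ρB r.flip v b)
    (P : V →ₗ[K] V) (hP : ∀ (b : B) (v : V), P (r b v) = r b (P v)) :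
    ∀ (v : V) (b : B),
      DFhom K H Finv ρV ρV P (sw K H Finv ρV ρB r.flip v b)
        = sw K H Finv ρV ρB r.flip (DFhom K H Finv ρV ρV P v) b := by
  intro v b
  rw [DFhom_sw hV hBma.1 hcr, sw_DFhom hV hBma.1 hcr hP, hF.inv_cocycle]

end TwistPaper
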